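/- Let A be a real m×2 matrix of rank 2. Then every vector x ∈ ℝ² is phase retrieval from its phaseless measurements |Ax| (i.e. for all x, y ∈ ℝ², |Ax| = |Ay| entrywise implies y = x or y = −x) if and only if the complex range space R_ℂ(A) is complex conjugate phase retrieval. -/

import Mathlib

/-!
For `x, y ∈ ℂ²` and a real row `a`, `|aᵀy|² - |aᵀx|²` is the binary quadratic form
`(|y₀|² - |x₀|²) a₀² + 2 Re(y₀ȳ₁ - x₀x̄₁) a₀a₁ + (|y₁|² - |x₁|²) a₁²` in `a`. Since `|p| = |q|` iff
`(p + q)(p - q) = 0`, real phase retrieval says that `(Au)ᵢ (Av)ᵢ = 0` for all `i` forces `u = 0` or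
`v = 0`. Hence a binary form vanishing on every row of `A` is zero: a definite one would kill all rows,
and an indefinite or degenerate one factors into two real linear forms, one of which must vanish.
The three vanishing coefficients determine the Gram matrix `y yᴴ` up to complex conjugation, so `y`
is determined up to a unimodular factor and conjugation.

Conversely, for real `x, y` an identity `Ay = z Ax` gives `Ay = (Re z) Ax`, so `|Ay| = |Ax|` forces
`Re z = ±1` unless `Ax = 0`; rank two makes `A` injective.
-/

open Complex Matrix
open ComplexConjugate

variable {ι n : Type*} [Fintype n]

def IsPhaseRetrieval (A : Matrix ι n ℝ) : Prop :=
  ∀ x y : n → ℝ, (∀ i, |(A *ᵥ x) i| = |(A *ᵥ y) i|) → y = x ∨ y = -x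

/-- The complex range space `{A x : x ∈ ℂⁿ}` is complex conjugate phase retrieval. -/
def IsConjPhaseRetrieval (A : Matrix ι n ℝ) : Prop :=
  ∀ xf y : n → ℂ, (∀ i, ‖(A.map ofReal *ᵥ y) i‖ = ‖(A.map ofReal *ᵥ xf) i‖) →
    ∃ z : ℂ, ‖z‖ = 1 ∧
      (A.map ofReal *ᵥ y = z • (A.map ofReal *ᵥ xf) ∨
        A.map ofReal *ᵥ y = z • (A.map ofReal *ᵥ star xf))

theorem Matrix.mulVec_injective_of_rank_eq_card {K : Type*} [Field K] {A : Matrix ι n K}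
    (h : A.rank = Fintype.card n) : Function.Injective A.mulVec :=
  mulVec_injective_iff.2 <| linearIndependent_iff_card_eq_finrank_span.2 <|
    h.symm.trans A.rank_eq_finrank_span_cols

theorem IsPhaseRetrieval.eq_zero_or_eq_zero {A : Matrix ι n ℝ} (hA : IsPhaseRetrieval A)
    {u v : n → ℝ} (h : ∀ i, (A *ᵥ u) i * (A *ᵥ v) i = 0) : u = 0 ∨ v = 0 := by
  have habs : ∀ i, |(A *ᵥ (u + v)) i| = |(A *ᵥ (v - u)) i| := fun i => by
    rw [← sq_eq_sq_iff_abs_eq_abs, mulVec_add, mulVec_sub, Pi.add_apply, Pi.sub_apply]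
    linear_combination 4 * h i
  refine (hA _ _ habs).imp (fun huv => ?_) (fun huv => ?_)
  · linear_combination (norm := module) (-1 / 2 : ℝ) • huv
  · linear_combination (norm := module) (1 / 2 : ℝ) • huv

theorem eq_zero_of_discrim_neg {a b c : ℝ} (h : discrim a b c < 0) {s t : ℝ}
    (hq : a * s ^ 2 + b * s * t + c * t ^ 2 = 0) : s = 0 ∧ t = 0 := by
  unfold discrim at h
  have ha : a ≠ 0 := by rintro rfl; nlinarith [sq_nonneg b]
  have hsum : (2 * a * s + b * t) ^ 2 + (4 * a * c - b ^ 2) * t ^ 2 = 0 := by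
    linear_combination 4 * a * hq
  have ht : t = 0 := by
    have := ((add_eq_zero_iff_of_nonneg (sq_nonneg _) (by nlinarith [sq_nonneg t])).1 hsum).2
    simpa [show 4 * a * c - b ^ 2 ≠ 0 by linarith] using this
  subst ht
  exact ⟨by simpa [ha] using hq, rfl⟩

theorem exists_eq_mul_of_discrim_nonneg {a b c : ℝ} (h : 0 ≤ discrim a b c) :
    ∃ u v : Fin 2 → ℝ, ∀ w : Fin 2 → ℝ,
      a * w 0 ^ 2 + b * w 0 * w 1 + c * w 1 ^ 2 = (w ⬝ᵥ u) * (w ⬝ᵥ v) := by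
  by_cases ha : a = 0
  · exact ⟨![0, 1], ![b, c], fun w => by simp [dotProduct, Fin.sum_univ_two, ha]; ring⟩
  · -- `4a · (a s² + b s t + c t²) = (2a s + b t)² - (√Δ t)²`
    set r := √(discrim a b c)
    have hr : r ^ 2 = b ^ 2 - 4 * a * c := Real.sq_sqrt h
    refine ⟨![2 * a, b - r], ![1 / 2, (b + r) / (4 * a)], fun w => ?_⟩
    simp only [dotProduct, Fin.sum_univ_two, cons_val_zero, cons_val_one]
    field_simp
    linear_combination 2 * w 1 ^ 2 * hr

theorem IsPhaseRetrieval.quadratic_coeffs_eq_zero {A : Matrix ι (Fin 2) ℝ}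
    (hA : IsPhaseRetrieval A) {a b c : ℝ}
    (hq : ∀ i, a * A i 0 ^ 2 + b * A i 0 * A i 1 + c * A i 1 ^ 2 = 0) :
    a = 0 ∧ b = 0 ∧ c = 0 := by
  rcases lt_or_ge (discrim a b c) 0 with hneg | hnonneg
  · have hrows : ∀ i, A i = 0 := fun i => by
      obtain ⟨h0, h1⟩ := eq_zero_of_discrim_neg hneg (hq i)
      funext j; fin_cases j <;> assumption
    have hzero : ∀ u, A *ᵥ u = 0 := fun u => by
      funext i; simp [mulVec, hrows i]
    have := hA.eq_zero_or_eq_zero (u := ![1, 0]) (v := ![1, 0]) (fun i => by simp [hzero])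
    simp at this
  · obtain ⟨u, v, huv⟩ := exists_eq_mul_of_discrim_nonneg hnonneg
    have hform : ∀ w : Fin 2 → ℝ, a * w 0 ^ 2 + b * w 0 * w 1 + c * w 1 ^ 2 = 0 := by
      rcases hA.eq_zero_or_eq_zero (u := u) (v := v) (fun i => (huv (A i)).symm.trans (hq i))
        with rfl | rfl <;> simp [huv]
    have h10 := hform ![1, 0]
    have h01 := hform ![0, 1]
    have h11 := hform ![1, 1]
    simp only [cons_val_zero, cons_val_one, cons_val_fin_one, one_pow, mul_one, mul_zero,
      add_zero, zero_add, ne_eq, OfNat.ofNat_ne_zero, not_false_eq_true, zero_pow] at h10 h01 h11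
    refine ⟨h10, ?_, h01⟩
    linarith

theorem Complex.normSq_ofReal_mul_add_ofReal_mul (s t : ℝ) (z w : ℂ) :
    normSq (s * z + t * w) =
      normSq z * s ^ 2 + 2 * (z * conj w).re * s * t + normSq w * t ^ 2 := by
  simp only [normSq_apply, add_re, add_im, mul_re, mul_im, ofReal_re, ofReal_im, conj_re, conj_im]
  ring

theorem Complex.eq_or_eq_conj_of_normSq_eq_of_re_eq {z w : ℂ} (hn : normSq z = normSq w)
    (hre : z.re = w.re) : z = w ∨ z = conj w := by
  rw [normSq_apply, normSq_apply, hre] at hn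
  have him : (z.im - w.im) * (z.im + w.im) = 0 := by linear_combination hn
  rcases mul_eq_zero.1 him with h | h
  · exact .inl (Complex.ext hre (by linarith))
  · exact .inr (Complex.ext (by simpa using hre) (by rw [conj_im]; linarith))

theorem exists_norm_eq_one_smul_eq_of_mul_conj_eq {x y : ι → ℂ}
    (h : ∀ j k, y j * conj (y k) = x j * conj (x k)) : ∃ z : ℂ, ‖z‖ = 1 ∧ y = z • x := by
  by_cases hx : x = 0
  · refine ⟨1, norm_one, ?_⟩
    funext j
    simpa [hx, mul_conj] using h j j
  obtain ⟨k, hk⟩ := Function.ne_iff.1 hx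
  have hkk : y k * conj (y k) = x k * conj (x k) := h k k
  have hnorm : ‖y k‖ = ‖x k‖ := by
    rw [mul_conj, mul_conj, ofReal_inj, normSq_eq_norm_sq, normSq_eq_norm_sq] at hkk
    exact (pow_left_inj₀ (norm_nonneg _) (norm_nonneg _) two_ne_zero).1 hkk
  refine ⟨y k / x k, by rw [norm_div, hnorm, div_self (norm_ne_zero_iff.2 hk)], funext fun j => ?_⟩
  rw [Pi.smul_apply, smul_eq_mul, div_mul_eq_mul_div, eq_div_iff hk]
  refine mul_right_cancel₀ ((map_ne_zero (starRingEnd ℂ)).2 hk) ?_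
  linear_combination y k * h j k - y j * hkk

theorem mul_conj_eq_of_normSq_eq_of_mul_conj_eq {x y : Fin 2 → ℂ}
    (h0 : normSq (y 0) = normSq (x 0)) (h1 : normSq (y 1) = normSq (x 1))
    (h01 : y 0 * conj (y 1) = x 0 * conj (x 1)) (j k : Fin 2) :
    y j * conj (y k) = x j * conj (x k) := by
  have h10 : y 1 * conj (y 0) = x 1 * conj (x 0) := by
    simpa [mul_comm] using congrArg conj h01
  fin_cases j <;> fin_cases k <;> simp [mul_conj, h0, h1, h01, h10]

theorem exists_norm_eq_one_of_normSq_eq_of_re_mul_conj_eq {x y : Fin 2 → ℂ}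
    (h0 : normSq (y 0) = normSq (x 0)) (h1 : normSq (y 1) = normSq (x 1))
    (hre : (y 0 * conj (y 1)).re = (x 0 * conj (x 1)).re) :
    ∃ z : ℂ, ‖z‖ = 1 ∧ (y = z • x ∨ y = z • star x) := by
  have hn : normSq (y 0 * conj (y 1)) = normSq (x 0 * conj (x 1)) := by
    simp only [normSq_mul, normSq_conj, h0, h1]
  rcases eq_or_eq_conj_of_normSq_eq_of_re_eq hn hre with h01 | h01
  · obtain ⟨z, hz, hy⟩ := exists_norm_eq_one_smul_eq_of_mul_conj_eq
      (mul_conj_eq_of_normSq_eq_of_mul_conj_eq h0 h1 h01)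
    exact ⟨z, hz, .inl hy⟩
  · obtain ⟨z, hz, hy⟩ := exists_norm_eq_one_smul_eq_of_mul_conj_eq
      (mul_conj_eq_of_normSq_eq_of_mul_conj_eq (x := star x) (by simpa using h0)
        (by simpa using h1) (by simpa [mul_comm] using h01))
    exact ⟨z, hz, .inr hy⟩

theorem IsPhaseRetrieval.isConjPhaseRetrieval {A : Matrix ι (Fin 2) ℝ}
    (hA : IsPhaseRetrieval A) : IsConjPhaseRetrieval A := by
  intro x y habs
  have hentry : ∀ (w : Fin 2 → ℂ) i, (A.map ofReal *ᵥ w) i = A i 0 * w 0 + A i 1 * w 1 := by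
    simp [mulVec, dotProduct, Fin.sum_univ_two]
  have hq : ∀ i, (normSq (y 0) - normSq (x 0)) * A i 0 ^ 2 +
      (2 * (y 0 * conj (y 1)).re - 2 * (x 0 * conj (x 1)).re) * A i 0 * A i 1 +
      (normSq (y 1) - normSq (x 1)) * A i 1 ^ 2 = 0 := fun i => by
    have := congrArg (· ^ 2) (habs i)
    simp only [← normSq_eq_norm_sq, hentry, normSq_ofReal_mul_add_ofReal_mul] at this
    linear_combination this
  obtain ⟨h0, hre, h1⟩ := hA.quadratic_coeffs_eq_zero hq
  obtain ⟨z, hz, hy | hy⟩ := exists_norm_eq_one_of_normSq_eq_of_re_mul_conj_eq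
    (sub_eq_zero.1 h0) (sub_eq_zero.1 h1) (by linarith)
  · exact ⟨z, hz, .inl (by rw [hy, mulVec_smul])⟩
  · exact ⟨z, hz, .inr (by rw [hy, mulVec_smul])⟩

theorem eq_or_eq_neg_of_abs_eq_of_ofReal_eq_mul {w w' : ι → ℝ} {z : ℂ}
    (habs : ∀ i, |w' i| = |w i|) (h : ∀ i, (w' i : ℂ) = z * w i) : w' = w ∨ w' = -w := by
  have hre : ∀ i, w' i = z.re * w i := fun i => by
    simpa using congrArg re (h i)
  by_cases hw : w = 0
  · left
    funext i
    simpa [hw] using habs i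
  obtain ⟨i, hi⟩ := Function.ne_iff.1 hw
  have hz : |z.re| = 1 := by
    have := habs i
    rw [hre i, abs_mul] at this
    exact (mul_eq_right₀ (abs_ne_zero.2 hi)).1 this
  rcases abs_eq zero_le_one |>.1 hz with hz | hz
  · exact .inl (funext fun i => by simp [hre i, hz])
  · exact .inr (funext fun i => by simp [hre i, hz])

theorem IsConjPhaseRetrieval.isPhaseRetrieval {A : Matrix ι n ℝ}
    (hinj : Function.Injective A.mulVec) (hA : IsConjPhaseRetrieval A) : IsPhaseRetrieval A := by
  intro x y habs
  have hreal : ∀ (w : n → ℝ) i, (A.map ofReal *ᵥ (ofReal ∘ w)) i = ((A *ᵥ w) i : ℂ) :=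
    fun w i => (RingHom.map_mulVec ofRealHom A w i).symm
  obtain ⟨z, -, hz⟩ := hA (ofReal ∘ x) (ofReal ∘ y) fun i => by
    simp only [hreal, norm_real, Real.norm_eq_abs, habs i]
  have hstar : star (ofReal ∘ x) = ofReal ∘ x := funext fun j => conj_ofReal (x j)
  rw [hstar, or_self] at hz
  rcases eq_or_eq_neg_of_abs_eq_of_ofReal_eq_mul (fun i => (habs i).symm)
    (fun i => by simpa only [Pi.smul_apply, smul_eq_mul, hreal] using congrFun hz i) with h | h
  · exact .inl (hinj h)
  · exact .inr (hinj (by rw [h, mulVec_neg]))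

/-- **Proposition 2.8.**  Let `A` be a real `m × 2` matrix of rank `2`.  Then every
vector `x ∈ ℝ²` is phase retrieval from its phaseless measurements `|A x|` if and only
if the complex range space `R_ℂ(A)` is complex conjugate phase retrieval. -/
theorem stmt_7 {m : ℕ} (A : Matrix (Fin m) (Fin 2) ℝ) (hA : A.rank = 2) :
    (∀ x y : Fin 2 → ℝ, (∀ i, |A.mulVec x i| = |A.mulVec y i|) → y = x ∨ y = -x) ↔
      (∀ xf y : Fin 2 → ℂ,
        (∀ i, ‖(A.map (Complex.ofReal)).mulVec y i‖ =
          ‖(A.map (Complex.ofReal)).mulVec xf i‖) →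
        ∃ z : ℂ, ‖z‖ = 1 ∧
          ((A.map (Complex.ofReal)).mulVec y = z • (A.map (Complex.ofReal)).mulVec xf ∨
            (A.map (Complex.ofReal)).mulVec y = z • (A.map (Complex.ofReal)).mulVec (star xf))) :=
  ⟨IsPhaseRetrieval.isConjPhaseRetrieval,
    IsConjPhaseRetrieval.isPhaseRetrieval
      (mulVec_injective_of_rank_eq_card (by rw [hA, Fintype.card_fin]))⟩
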